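/- arXiv:1110.3875 — 6 statements merged into one kernel-verified Lean document; each statement's English description precedes it below -/
import Mathlib

section
/- Let n and d be integers with 0 ≤ d ≤ n and let f : F_2^n → F_2 be a Boolean function such that f(α) = 1 for every α ∈ F_2^n with 0 ≤ wt(α) ≤ d. Then f has no annihilator of algebraic degree less than or equal to d; that is, there is no nonzero Boolean function h : F_2^n → F_2 with deg(h) ≤ d and f(x)h(x) = 0 for all x ∈ F_2^n. -/
open Finset

/-- Hamming weight of a vector in `F_2^n`. -/
def wt {n : ℕ} (α : Fin n → ZMod 2) : ℕ :=
  (Finset.univ.filter fun i => α i = 1).card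

/-- `preceq β α` means `β ⪯ α`, i.e. `β i ≤ α i` coordinatewise. -/
def preceq {n : ℕ} (β α : Fin n → ZMod 2) : Prop :=
  ∀ i, β i = 1 → α i = 1

instance {n : ℕ} (β α : Fin n → ZMod 2) : Decidable (preceq β α) :=
  inferInstanceAs (Decidable (∀ i, β i = 1 → α i = 1))

/-- ANF coefficient of a Boolean function at `α` (Möbius inversion over the Boolean lattice). -/
def anf {n : ℕ} (f : (Fin n → ZMod 2) → ZMod 2) (α : Fin n → ZMod 2) : ZMod 2 :=
  ∑ β ∈ Finset.univ.filter (fun β => preceq β α), f β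

/-- Algebraic degree of a Boolean function: the largest weight of a monomial
with nonzero ANF coefficient. -/
def degB {n : ℕ} (f : (Fin n → ZMod 2) → ZMod 2) : ℕ :=
  (Finset.univ.filter fun α => anf f α ≠ 0).sup wt

/-- Algebraic immunity: minimum degree of a nonzero annihilator of `f` or of `f ⊕ 1`. -/
noncomputable def AI {n : ℕ} (f : (Fin n → ZMod 2) → ZMod 2) : ℕ :=
  sInf {d | ∃ h : (Fin n → ZMod 2) → ZMod 2, h ≠ 0 ∧ degB h = d ∧
    ((∀ x, f x * h x = 0) ∨ (∀ x, (f x + 1) * h x = 0))}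

/-- Elementary symmetric polynomial of degree `i` on `n` variables, as a Boolean function. -/
def esymB (n i : ℕ) (x : Fin n → ZMod 2) : ZMod 2 :=
  ∑ α ∈ Finset.univ.filter (fun α : Fin n → ZMod 2 => wt α = i),
    ∏ j ∈ Finset.univ.filter (fun j => α j = 1), x j

/-!
A nonzero Boolean function `h` is nonzero at some point of weight at most `deg h`: at a point `α`
of minimal weight in the support of `h`, every `β ⪯ α` with `β ≠ α` is lighter, so the ANF
coefficient of `x^α` is `h α ≠ 0`, whence `wt α ≤ deg h`. If `f` is `1` on all points of weight
at most `d ≥ deg h`, then `f α h α = h α ≠ 0`.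
-/

lemma wt_lt_wt_of_preceq_of_ne {n : ℕ} {β α : Fin n → ZMod 2} (hle : preceq β α) (hne : β ≠ α) :
    wt β < wt α := by
  refine Finset.card_lt_card ⟨fun i hi => ?_, fun hsub => hne (funext fun i => ?_)⟩
  · simp only [mem_filter, mem_univ, true_and] at hi ⊢
    exact hle i hi
  · have eq_of_eq_one_iff : ∀ a b : ZMod 2, (a = 1 ↔ b = 1) → a = b := by decide
    exact eq_of_eq_one_iff _ _ ⟨hle i, fun hα => by simpa using hsub (by simpa using hα)⟩

lemma anf_eq_of_forall_wt_lt {n : ℕ} {h : (Fin n → ZMod 2) → ZMod 2} {α : Fin n → ZMod 2}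
    (hmin : ∀ β, wt β < wt α → h β = 0) : anf h α = h α := by
  refine Finset.sum_eq_single_of_mem α (mem_filter.mpr ⟨mem_univ α, fun _ hi => hi⟩) ?_
  exact fun β hβ hne => hmin β (wt_lt_wt_of_preceq_of_ne (mem_filter.mp hβ).2 hne)

lemma le_degB_of_anf_ne_zero {n : ℕ} {h : (Fin n → ZMod 2) → ZMod 2} {α : Fin n → ZMod 2}
    (hα : anf h α ≠ 0) : wt α ≤ degB h :=
  Finset.le_sup (mem_filter.mpr ⟨mem_univ α, hα⟩)

lemma exists_ne_zero_wt_le_degB {n : ℕ} {h : (Fin n → ZMod 2) → ZMod 2} (hh : h ≠ 0) :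
    ∃ α, h α ≠ 0 ∧ wt α ≤ degB h := by
  obtain ⟨x, hx⟩ := Function.ne_iff.mp hh
  obtain ⟨α, hα, hmin⟩ :=
    (univ.filter fun α => h α ≠ 0).exists_min_image wt ⟨x, mem_filter.mpr ⟨mem_univ x, hx⟩⟩
  have hα : h α ≠ 0 := (mem_filter.mp hα).2
  have hanf : anf h α = h α := anf_eq_of_forall_wt_lt fun β hβ => by
    by_contra hne
    exact (hmin β (mem_filter.mpr ⟨mem_univ β, hne⟩)).not_gt hβ
  exact ⟨α, hα, le_degB_of_anf_ne_zero (hanf ▸ hα)⟩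

theorem stmt_1_general {n : ℕ} (d : ℕ)
    (f : (Fin n → ZMod 2) → ZMod 2)
    (hf : ∀ α : Fin n → ZMod 2, wt α ≤ d → f α = 1) :
    ¬ ∃ h : (Fin n → ZMod 2) → ZMod 2,
        h ≠ 0 ∧ degB h ≤ d ∧ ∀ x, f x * h x = 0 := by
  rintro ⟨h, hne, hdeg, hann⟩
  obtain ⟨α, hα, hwt⟩ := exists_ne_zero_wt_le_degB hne
  have hprod := hann α
  rw [hf α (hwt.trans hdeg), one_mul] at hprod
  exact hα hprod

theorem stmt_1 {n : ℕ} (d : ℕ) (hdn : d ≤ n)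
    (f : (Fin n → ZMod 2) → ZMod 2)
    (hf : ∀ α : Fin n → ZMod 2, wt α ≤ d → f α = 1) :
    ¬ ∃ h : (Fin n → ZMod 2) → ZMod 2,
        h ≠ 0 ∧ degB h ≤ d ∧ ∀ x, f x * h x = 0 :=
  stmt_1_general d f hf
end

section
/- Let n and d be integers with 0 ≤ d ≤ n and let g : F_2^n → F_2 be a Boolean function such that g(β) = 1 for every β ∈ F_2^n with n−d ≤ wt(β) ≤ n. Then g has no annihilator of algebraic degree less than or equal to d; that is, there is no nonzero Boolean function h : F_2^n → F_2 with deg(h) ≤ d and g(x)h(x) = 0 for all x ∈ F_2^n. -/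
open Finset

/-!
Identify `F_2^n` with the subsets of `Fin n` through supports. The ANF becomes the binary Möbius
transform `μF t = ∑_{u ⊆ t} F u`, an involution in characteristic two, and for `F' s = F sᶜ` one
has `μF' y = ∑_{t ⊇ y} μF t`. If `#y ≤ d`, all the `uᶜ` with `u ⊆ y` have at least `n - d`
elements, so `μF' y = 0` because `F` vanishes on them; if `#y > d`, all the `t ⊇ y` have more
than `d` elements, so `μF' y = 0` because `deg F ≤ d`. Hence `F' = μ(μF') = 0`.
-/

section MobiusTransform

variable {ι M : Type*} [DecidableEq ι] [AddCommGroup M] [Module (ZMod 2) M]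

theorem two_pow_nsmul_eq_ite (k : ℕ) (x : M) : 2 ^ k • x = if k = 0 then x else 0 := by
  rcases k with _ | k
  · simp
  · rw [if_neg k.succ_ne_zero, pow_succ, mul_nsmul, ← Nat.cast_smul_eq_nsmul (ZMod 2) 2]
    simp [show (2 : ZMod 2) = 0 from rfl]

def mobiusTransform (F : Finset ι → M) (s : Finset ι) : M :=
  ∑ t ∈ s.powerset, F t

theorem mobiusTransform_mobiusTransform (F : Finset ι → M) :
    mobiusTransform (mobiusTransform F) = F := by
  funext s
  calc ∑ t ∈ s.powerset, ∑ u ∈ t.powerset, F u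
      = ∑ u ∈ s.powerset, ∑ _t ∈ Icc u s, F u :=
        sum_comm' fun t u => by simp only [mem_powerset, mem_Icc]; grind
    _ = ∑ u ∈ s.powerset, 2 ^ (#s - #u) • F u := by
        refine sum_congr rfl fun u hu => ?_
        rw [sum_const, card_Icc_finset (mem_powerset.1 hu)]
    _ = F s := by
        refine (sum_eq_single_of_mem s (mem_powerset_self s) fun u hu hne => ?_).trans (by simp)
        have := card_lt_card (ssubset_of_subset_of_ne (mem_powerset.1 hu) hne)
        rw [two_pow_nsmul_eq_ite, if_neg (by omega)]

theorem mobiusTransform_comp_compl [Fintype ι] (G : Finset ι → M) (y : Finset ι) :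
    mobiusTransform (mobiusTransform G ∘ compl) y = ∑ t with y ⊆ t, G t := by
  calc ∑ u ∈ y.powerset, ∑ t ∈ uᶜ.powerset, G t
      = ∑ t, ∑ _u ∈ (y \ t).powerset, G t :=
        sum_comm' fun u t => by
          simp only [mem_powerset, subset_sdiff, subset_compl_iff_disjoint_left, mem_univ,
            and_true]
    _ = ∑ t, if y ⊆ t then G t else 0 := by
        refine sum_congr rfl fun t _ => ?_
        simp only [sum_const, card_powerset, two_pow_nsmul_eq_ite, card_eq_zero,
          sdiff_eq_empty_iff_subset]
    _ = ∑ t with y ⊆ t, G t := (sum_filter _ _).symm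

theorem eq_zero_of_mobiusTransform_eq_zero_of_lt_card_of_eq_zero_of_le_card [Fintype ι]
    (F : Finset ι → M) (d : ℕ)
    (hdeg : ∀ t, d < #t → mobiusTransform F t = 0)
    (hF : ∀ s, Fintype.card ι - d ≤ #s → F s = 0) : F = 0 := by
  have hcompl : mobiusTransform (F ∘ compl) = 0 := by
    funext y
    by_cases hy : #y ≤ d
    · refine sum_eq_zero fun u hu => hF _ ?_
      have := card_le_card (mem_powerset.1 hu)
      rw [card_compl]
      omega
    · have hsup := mobiusTransform_comp_compl (mobiusTransform F) y
      rw [mobiusTransform_mobiusTransform] at hsup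
      rw [hsup]
      exact sum_eq_zero fun t ht =>
        hdeg t ((not_le.1 hy).trans_le (card_le_card (mem_filter.1 ht).2))
  funext s
  have := congrFun (mobiusTransform_mobiusTransform (F ∘ compl)) sᶜ
  rw [hcompl] at this
  simpa [mobiusTransform] using this.symm

end MobiusTransform

def supportEquiv (ι : Type*) [Fintype ι] [DecidableEq ι] : (ι → ZMod 2) ≃ Finset ι where
  toFun α := univ.filter fun i => α i = 1
  invFun s i := if i ∈ s then 1 else 0
  left_inv α := by
    funext i
    by_cases h : α i = 1
    · simp [h]
    · have : α i = 0 := by revert h; generalize α i = a; revert a; decide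
      simp [this]
  right_inv s := by ext i; by_cases h : i ∈ s <;> simp [h]

theorem card_supportEquiv {n : ℕ} (α : Fin n → ZMod 2) : #(supportEquiv (Fin n) α) = wt α :=
  rfl

theorem anf_eq_mobiusTransform {n : ℕ} (h : (Fin n → ZMod 2) → ZMod 2) (α : Fin n → ZMod 2) :
    anf h α = mobiusTransform (h ∘ (supportEquiv (Fin n)).symm) (supportEquiv (Fin n) α) :=
  sum_equiv (supportEquiv (Fin n))
    (fun β => by rw [mem_filter]; simp [preceq, supportEquiv, subset_iff]) (fun β _ => by simp)

theorem anf_eq_zero_of_degB_lt {n : ℕ} {h : (Fin n → ZMod 2) → ZMod 2} {α : Fin n → ZMod 2}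
    (hα : degB h < wt α) : anf h α = 0 := by
  by_contra hne
  exact (le_sup (f := wt) (mem_filter.2 ⟨mem_univ α, hne⟩)).not_gt hα

theorem eq_zero_of_degB_le_of_eq_zero_of_le_wt {n : ℕ} (d : ℕ) (h : (Fin n → ZMod 2) → ZMod 2)
    (hdeg : degB h ≤ d) (hh : ∀ x, n - d ≤ wt x → h x = 0) : h = 0 := by
  set e := supportEquiv (Fin n)
  have hF : h ∘ e.symm = 0 := by
    refine eq_zero_of_mobiusTransform_eq_zero_of_lt_card_of_eq_zero_of_le_card _ d
      (fun t ht => ?_) (fun s hs => ?_)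
    · obtain ⟨α, rfl⟩ := e.surjective t
      rw [card_supportEquiv] at ht
      rw [← anf_eq_mobiusTransform]
      exact anf_eq_zero_of_degB_lt (hdeg.trans_lt ht)
    · obtain ⟨x, rfl⟩ := e.surjective s
      rw [card_supportEquiv, Fintype.card_fin] at hs
      simpa using hh x hs
  funext x
  simpa using congrFun hF (e x)

theorem stmt_2_general {n : ℕ} (d : ℕ)
    (g : (Fin n → ZMod 2) → ZMod 2)
    (hg : ∀ β : Fin n → ZMod 2, n - d ≤ wt β → g β = 1) :
    ¬ ∃ h : (Fin n → ZMod 2) → ZMod 2,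
        h ≠ 0 ∧ degB h ≤ d ∧ ∀ x, g x * h x = 0 := by
  rintro ⟨h, hne, hdeg, hann⟩
  refine hne (eq_zero_of_degB_le_of_eq_zero_of_le_wt d h hdeg fun x hx => ?_)
  simpa [hg x hx] using hann x

theorem stmt_2 {n : ℕ} (d : ℕ) (hdn : d ≤ n)
    (g : (Fin n → ZMod 2) → ZMod 2)
    (hg : ∀ β : Fin n → ZMod 2, n - d ≤ wt β → g β = 1) :
    ¬ ∃ h : (Fin n → ZMod 2) → ZMod 2,
        h ≠ 0 ∧ degB h ≤ d ∧ ∀ x, g x * h x = 0 :=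
  stmt_2_general d g hg
end

section
/- Let q ≥ 0 and let N, M be nonnegative integers with N ≡ 2^q (mod 2^{q+1}) and M ≡ 2^{q+1} − 1 (mod 2^{q+1}). Then the sum of binomial coefficients ∑_{i=0}^{M} C(N, i) is even. -/
open Finset

/-!
Let `P = 2 ^ (q + 1)`, so that `P ∣ M + 1`. Lucas' theorem in base `P` gives
`C(N, b P + r) ≡ C(N / P, b) C(N % P, r) (mod 2)` for `r < P`, so cutting `[0, M]` into blocks of
length `P` factors the sum modulo 2 as `(∑ b, C(N / P, b)) · 2 ^ (N % P)`, and `N % P = 2 ^ q ≠ 0`.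
-/

theorem Finset.sum_range_mul_eq_sum_sum_range {β : Type*} [AddCommMonoid β] (f : ℕ → β)
    (K P : ℕ) : ∑ i ∈ range (K * P), f i = ∑ b ∈ range K, ∑ r ∈ range P, f (b * P + r) := by
  induction K with
  | zero => simp
  | succ K ih => rw [Nat.succ_mul, sum_range_add, ih, sum_range_succ]

theorem Nat.sum_range_choose_of_lt {m P : ℕ} (h : m < P) :
    ∑ r ∈ range P, m.choose r = 2 ^ m := by
  rw [← Nat.sum_range_choose m]
  refine (Finset.sum_subset (range_subset_range.mpr h) fun r _ hr => ?_).symm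
  exact Nat.choose_eq_zero_of_lt (by simpa using hr)

namespace Choose

variable {p : ℕ} [Fact p.Prime]

theorem choose_modEq_choose_mod_pow_mul_choose_div_pow (a n k : ℕ) :
    n.choose k ≡ (n % p ^ a).choose (k % p ^ a) * (n / p ^ a).choose (k / p ^ a) [MOD p] := by
  induction a generalizing n k with
  | zero => simpa [Nat.mod_one] using Nat.ModEq.refl _
  | succ a ih =>
    have hmod (x : ℕ) : x % p ^ (a + 1) % p = x % p :=
      Nat.mod_mod_of_dvd x (dvd_pow_self p a.succ_ne_zero)
    have hmod_div (x : ℕ) : x % p ^ (a + 1) / p = x / p % p ^ a := by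
      rw [pow_succ']; exact Nat.mod_mul_right_div_self x p (p ^ a)
    have hdiv (x : ℕ) : x / p ^ (a + 1) = x / p / p ^ a := by
      rw [Nat.div_div_eq_div_mul, pow_succ']
    calc n.choose k
        ≡ (n % p).choose (k % p) * (n / p).choose (k / p) [MOD p] :=
          choose_modEq_choose_mod_mul_choose_div_nat
      _ ≡ (n % p).choose (k % p) * ((n / p % p ^ a).choose (k / p % p ^ a) *
            (n / p / p ^ a).choose (k / p / p ^ a)) [MOD p] := (ih _ _).mul_left _
      _ ≡ (n % p ^ (a + 1)).choose (k % p ^ (a + 1)) * (n / p ^ (a + 1)).choose (k / p ^ (a + 1))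
            [MOD p] := by
          rw [← mul_assoc, hdiv n, hdiv k]
          refine Nat.ModEq.mul_right _ ?_
          simpa only [hmod, hmod_div] using
            (choose_modEq_choose_mod_mul_choose_div_nat (p := p) (n := n % p ^ (a + 1))
              (k := k % p ^ (a + 1))).symm

theorem choose_mul_pow_add_modEq {a r : ℕ} (b n : ℕ) (hr : r < p ^ a) :
    n.choose (b * p ^ a + r) ≡ (n / p ^ a).choose b * (n % p ^ a).choose r [MOD p] := by
  have hpos : 0 < p ^ a := pow_pos (Fact.out : p.Prime).pos a
  have := choose_modEq_choose_mod_pow_mul_choose_div_pow (p := p) a n (p ^ a * b + r)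
  rwa [Nat.mul_add_mod, Nat.mod_eq_of_lt hr, Nat.mul_add_div hpos, Nat.div_eq_of_lt hr, add_zero,
    Nat.mul_comm ((n % p ^ a).choose r), mul_comm (p ^ a)] at this

theorem sum_range_mul_choose_eq (a K n : ℕ) :
    ∑ i ∈ range (K * p ^ a), (n.choose i : ZMod p) =
      (∑ b ∈ range K, ((n / p ^ a).choose b : ZMod p)) * 2 ^ (n % p ^ a) := by
  have hlt : n % p ^ a < p ^ a := Nat.mod_lt n (pow_pos (Fact.out : p.Prime).pos a)
  rw [sum_range_mul_eq_sum_sum_range, sum_mul]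
  refine sum_congr rfl fun b _ => ?_
  have hblock : ∀ r ∈ range (p ^ a), (n.choose (b * p ^ a + r) : ZMod p) =
      ((n / p ^ a).choose b : ZMod p) * ((n % p ^ a).choose r : ℕ) := fun r hr => by
    rw [← Nat.cast_mul, (ZMod.natCast_eq_natCast_iff _ _ _).mpr
      (choose_mul_pow_add_modEq b n (mem_range.mp hr))]
  rw [sum_congr rfl hblock, ← mul_sum, ← Nat.cast_sum, Nat.sum_range_choose_of_lt hlt]
  rw [Nat.cast_pow, Nat.cast_ofNat]

end Choose

theorem Nat.even_sum_range_choose_of_two_pow_dvd {a n M : ℕ} (hn : n % 2 ^ a ≠ 0)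
    (hM : 2 ^ a ∣ M + 1) : Even (∑ i ∈ range (M + 1), n.choose i) := by
  obtain ⟨K, hK⟩ := hM
  rw [even_iff_two_dvd, ← ZMod.natCast_eq_zero_iff, Nat.cast_sum, hK, mul_comm,
    Choose.sum_range_mul_choose_eq, show (2 : ZMod 2) = 0 from rfl, zero_pow hn, mul_zero]

theorem stmt_8 (q N M : ℕ)
    (hN : N % 2 ^ (q + 1) = 2 ^ q)
    (hM : M % 2 ^ (q + 1) = 2 ^ (q + 1) - 1) :
    Even (∑ i ∈ Finset.range (M + 1), N.choose i) := by
  refine Nat.even_sum_range_choose_of_two_pow_dvd (a := q + 1) (by simp [hN]) ?_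
  have hP : 1 ≤ 2 ^ (q + 1) := Nat.one_le_two_pow
  rw [Nat.dvd_iff_mod_eq_zero, Nat.add_mod, hM, Nat.one_mod_eq_one.mpr (by omega),
    Nat.sub_add_cancel hP, Nat.mod_self]
end

section
/- Let k and d be positive integers with 2 ≤ d ≤ k such that d is a suffix of k in binary, and let t be an integer with 0 ≤ t ≤ ⌊log₂ d⌋. Then there exists an integer i with 0 ≤ i ≤ d−1 and i − k ≡ 2^t (mod 2^{t+1}). -/
open Finset

lemma add_two_pow_mod_two_pow_succ_lt {d t : ℕ} (hd : d ≠ 0) (ht : t ≤ Nat.log 2 d) :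
    (d + 2 ^ t) % 2 ^ (t + 1) < d := by
  have hpow_le : 2 ^ Nat.log 2 d ≤ d := Nat.pow_log_le_self 2 hd
  rcases ht.lt_or_eq with ht | rfl
  · calc (d + 2 ^ t) % 2 ^ (t + 1) < 2 ^ (t + 1) := Nat.mod_lt _ (by positivity)
      _ ≤ 2 ^ Nat.log 2 d := Nat.pow_le_pow_right two_pos ht
      _ ≤ d := hpow_le
  · have hlt : d < 2 ^ (Nat.log 2 d + 1) := Nat.lt_pow_succ_log_self one_lt_two d
    have hsplit : d + 2 ^ Nat.log 2 d = d - 2 ^ Nat.log 2 d + 2 ^ (Nat.log 2 d + 1) := by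
      rw [pow_succ]; omega
    rw [hsplit, Nat.add_mod_right, Nat.mod_eq_of_lt (by omega)]
    have hpow_pos : 0 < 2 ^ Nat.log 2 d := by positivity
    omega

lemma modEq_of_mod_two_pow_eq {k d L t : ℕ} (hsuf : k % 2 ^ (L + 1) = d) (ht : t ≤ L) :
    k ≡ d [MOD 2 ^ (t + 1)] := by
  have hL : k ≡ d [MOD 2 ^ (L + 1)] := by
    rw [Nat.ModEq, ← hsuf, Nat.mod_mod]
  exact hL.of_dvd (pow_dvd_pow 2 (by omega))

theorem stmt_10_general (k d t : ℕ) (hd2 : 2 ≤ d)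
    (hsuf : k % 2 ^ (Nat.log 2 d + 1) = d)
    (ht : t ≤ Nat.log 2 d) :
    ∃ i : ℕ, i ≤ d - 1 ∧ (i : ℤ) - (k : ℤ) ≡ 2 ^ t [ZMOD (2 ^ (t + 1))] := by
  refine ⟨(d + 2 ^ t) % 2 ^ (t + 1), ?_, ?_⟩
  · have := add_two_pow_mod_two_pow_succ_lt (by omega : d ≠ 0) ht
    omega
  · have hk : k ≡ d [MOD 2 ^ (t + 1)] := modEq_of_mod_two_pow_eq hsuf ht
    have hi : (d + 2 ^ t) % 2 ^ (t + 1) ≡ k + 2 ^ t [MOD 2 ^ (t + 1)] :=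
      (Nat.mod_modEq _ _).trans (hk.symm.add_right _)
    have hi' := (Int.natCast_modEq_iff.mpr hi).sub_right (k : ℤ)
    push_cast at hi'
    simpa using hi'

theorem stmt_10 (k d t : ℕ) (hd2 : 2 ≤ d) (hdk : d ≤ k)
    (hsuf : k % 2 ^ (Nat.log 2 d + 1) = d)
    (ht : t ≤ Nat.log 2 d) :
    ∃ i : ℕ, i ≤ d - 1 ∧ (i : ℤ) - (k : ℤ) ≡ 2 ^ t [ZMOD (2 ^ (t + 1))] :=
  stmt_10_general k d t hd2 hsuf ht
end

section
/- Let k and d be positive integers with 1 ≤ d ≤ k such that d is a suffix of k in binary, and set n = 2k. Then for every integer x with x ∈ [0, d−1] ∪ [n−d+1, n], there exists an integer t with 0 ≤ t ≤ ⌊log₂ d⌋ such that x − k ≡ 2^t (mod 2^{t+1}); equivalently, the 2-adic valuation of x − k is at most ⌊log₂ d⌋. -/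
/-! With `L = ⌊log₂ d⌋`, the suffix condition says `k ≡ d (mod 2^(L+1))`, so `x - k` is congruent
modulo `2^(L+1)` to `x - d` or to `x - 2k + d`. Both are nonzero of absolute value at most
`d < 2^(L+1)`, hence `2^(L+1) ∤ x - k`, and the lowest set bit of `x - k` sits at some `t ≤ L`. -/

open Finset

theorem Int.exists_le_modEq_two_pow_of_not_dvd {z : ℤ} {L : ℕ}
    (hz : ¬ (2 : ℤ) ^ (L + 1) ∣ z) :
    ∃ t ≤ L, z ≡ 2 ^ t [ZMOD 2 ^ (t + 1)] := by
  induction L generalizing z with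
  | zero => exact ⟨0, le_rfl, by simpa [Int.ModEq, Int.emod_two_ne_zero] using hz⟩
  | succ L ih =>
    by_cases h2 : (2 : ℤ) ∣ z
    · obtain ⟨w, rfl⟩ := h2
      have hw : ¬ (2 : ℤ) ^ (L + 1) ∣ w := fun hw =>
        hz (by rw [pow_succ']; exact mul_dvd_mul_left 2 hw)
      obtain ⟨t, htL, ht⟩ := ih hw
      refine ⟨t + 1, by omega, ?_⟩
      rw [pow_succ' _ t, pow_succ' _ (t + 1)]
      exact ht.mul_left'
    · exact ⟨0, by omega, by simpa [Int.ModEq, Int.emod_two_ne_zero] using h2⟩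

theorem Int.not_two_pow_log_succ_dvd_of_natAbs_le {z : ℤ} {d : ℕ} (hz : z ≠ 0)
    (hzd : z.natAbs ≤ d) :
    ¬ (2 : ℤ) ^ (Nat.log 2 d + 1) ∣ z := by
  intro h
  have h' : 2 ^ (Nat.log 2 d + 1) ∣ z.natAbs := by
    simpa [Int.natAbs_pow] using Int.natAbs_dvd_natAbs.mpr h
  have := Nat.le_of_dvd (Int.natAbs_pos.mpr hz) h'
  have := Nat.lt_pow_succ_log_self (b := 2) (by norm_num) d
  omega

theorem stmt_11_general (k d : ℕ) (hd1 : 1 ≤ d)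
    (hsuf : k % 2 ^ (Nat.log 2 d + 1) = d) :
    ∀ x : ℕ, (x ≤ d - 1 ∨ (2 * k - d + 1 ≤ x ∧ x ≤ 2 * k)) →
      ∃ t : ℕ, t ≤ Nat.log 2 d ∧ (x : ℤ) - (k : ℤ) ≡ 2 ^ t [ZMOD (2 ^ (t + 1))] := by
  intro x hx
  have hdk : d ≤ k := hsuf ▸ Nat.mod_le k _
  have hkd : (2 : ℤ) ^ (Nat.log 2 d + 1) ∣ (k : ℤ) - d :=
    Int.dvd_self_sub_of_emod_eq (by exact_mod_cast hsuf)
  refine Int.exists_le_modEq_two_pow_of_not_dvd fun hdvd => ?_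
  rcases hx with hx | ⟨hlo, hhi⟩
  · refine Int.not_two_pow_log_succ_dvd_of_natAbs_le (z := (x : ℤ) - d) (d := d)
      (by omega) (by omega) ?_
    simpa only [sub_add_sub_cancel] using dvd_add hdvd hkd
  · refine Int.not_two_pow_log_succ_dvd_of_natAbs_le (z := (x : ℤ) - 2 * k + d) (d := d)
      (by omega) (by omega) ?_
    simpa only [show (x : ℤ) - k - (k - d) = x - 2 * k + d by ring] using dvd_sub hdvd hkd

theorem stmt_11 (k d : ℕ) (hd1 : 1 ≤ d) (hdk : d ≤ k)
    (hsuf : k % 2 ^ (Nat.log 2 d + 1) = d) :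
    ∀ x : ℕ, (x ≤ d - 1 ∨ (2 * k - d + 1 ≤ x ∧ x ≤ 2 * k)) →
      ∃ t : ℕ, t ≤ Nat.log 2 d ∧ (x : ℤ) - (k : ℤ) ≡ 2 ^ t [ZMOD (2 ^ (t + 1))] :=
  stmt_11_general k d hd1 hsuf
end

section
/- For every Boolean function f on n variables, the algebraic immunity satisfies AI(f) ≤ ⌈n/2⌉. -/
open Finset

/-!
An annihilator of `g` of degree `≤ d` is a nonzero combination of the `D` monomials of degree
`≤ d` that vanishes on the support of `g`; by linear algebra one exists as soon as the support
has fewer than `D` points. For `d = ⌈n/2⌉`, complementation `α ↦ α + 1` shows `2 D > 2 ^ n`, and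
the supports of `f` and `f + 1` partition the `2 ^ n` points, so one of them has fewer than `D`.
-/

lemma zmod_two_eq_zero_iff_ne_one : ∀ a : ZMod 2, a = 0 ↔ a ≠ 1 := by decide

section

variable {n : ℕ}

lemma preceq_antisymm {α β : Fin n → ZMod 2} (h₁ : preceq α β) (h₂ : preceq β α) :
    α = β := by
  funext i
  have : ∀ a b : ZMod 2, (a = 1 → b = 1) → (b = 1 → a = 1) → a = b := by decide
  exact this _ _ (h₁ i) (h₂ i)

def boolMonomial (α x : Fin n → ZMod 2) : ZMod 2 :=
  ∏ j ∈ Finset.univ.filter (fun j => α j = 1), x j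

lemma boolMonomial_apply (α x : Fin n → ZMod 2) :
    boolMonomial α x = if preceq α x then 1 else 0 := by
  split_ifs with h
  · exact prod_eq_one fun j hj => h j (mem_filter.mp hj).2
  · obtain ⟨i, hαi, hxi⟩ : ∃ i, α i = 1 ∧ x i ≠ 1 := by simpa [preceq] using h
    exact prod_eq_zero (mem_filter.mpr ⟨mem_univ i, hαi⟩) ((zmod_two_eq_zero_iff_ne_one _).mpr hxi)

/-- Flipping `x i` is a fixed-point-free involution of `{γ | γ ⪯ β}` pairing equal terms. -/
lemma anf_eq_zero_of_flip_invariant {f : (Fin n → ZMod 2) → ZMod 2}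
    {β : Fin n → ZMod 2} {i : Fin n} (hβ : β i = 1)
    (hf : ∀ x, f (x + Pi.single i 1) = f x) : anf f β = 0 := by
  refine sum_involution (fun x _ => x + Pi.single i 1)
    (fun x _ => by rw [hf, CharTwo.add_self_eq_zero]) (fun x _ _ => by simp)
    (fun x hx => ?_) (fun x _ => by ext j; simp [add_assoc, CharTwo.add_self_eq_zero])
  rw [mem_filter] at hx ⊢
  refine ⟨mem_univ _, fun j hj => ?_⟩
  rcases eq_or_ne j i with rfl | hji
  · exact hβ
  · exact hx.2 j (by simpa [hji] using hj)

lemma boolMonomial_add_single {α : Fin n → ZMod 2} {i : Fin n} (hα : α i ≠ 1)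
    (x : Fin n → ZMod 2) : boolMonomial α (x + Pi.single i 1) = boolMonomial α x := by
  refine prod_congr rfl fun j hj => ?_
  have hji : j ≠ i := by rintro rfl; exact hα (mem_filter.mp hj).2
  simp [hji]

lemma anf_boolMonomial (α β : Fin n → ZMod 2) :
    anf (boolMonomial α) β = if α = β then 1 else 0 := by
  split_ifs with hαβ
  · subst hαβ
    have hαα : preceq α α := fun _ h => h
    refine (sum_eq_single α (fun γ hγ hγα => ?_) (fun h => absurd (by simpa using hαα) h)).trans
      (by rw [boolMonomial_apply, if_pos hαα])
    rw [boolMonomial_apply, if_neg fun hαγ => hγα (preceq_antisymm (mem_filter.mp hγ).2 hαγ)]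
  by_cases hβα : preceq β α
  · refine sum_eq_zero fun γ hγ => ?_
    rw [boolMonomial_apply, if_neg fun hαγ => hαβ (preceq_antisymm
      (fun j hj => (mem_filter.mp hγ).2 j (hαγ j hj)) hβα)]
  · obtain ⟨i, hβi, hαi⟩ : ∃ i, β i = 1 ∧ α i ≠ 1 := by simpa [preceq] using hβα
    exact anf_eq_zero_of_flip_invariant hβi (boolMonomial_add_single hαi)

lemma anf_linearCombination_boolMonomial {M : Finset (Fin n → ZMod 2)} (c : M → ZMod 2)
    (β : Fin n → ZMod 2) :
    anf (Fintype.linearCombination (ZMod 2) (fun α : M => boolMonomial α.1) c) β =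
      if h : β ∈ M then c ⟨β, h⟩ else 0 := by
  have hlin : anf (Fintype.linearCombination (ZMod 2) (fun α : M => boolMonomial α.1) c) β =
      ∑ α : M, if α = β then c α else 0 := by
    simp only [anf, Fintype.linearCombination_apply, Finset.sum_apply, Pi.smul_apply, smul_eq_mul]
    rw [sum_comm]
    simp_rw [← mul_sum]
    exact sum_congr rfl fun α _ => by rw [← anf, anf_boolMonomial, mul_ite, mul_one, mul_zero]
  rw [hlin]
  split_ifs with h
  · simp_rw [← Subtype.ext_iff (a2 := ⟨β, h⟩)]
    simp
  · exact sum_eq_zero fun α _ => if_neg (by rintro rfl; exact h α.2)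

lemma degB_le_of_anf_eq_zero {d : ℕ} {f : (Fin n → ZMod 2) → ZMod 2}
    (hf : ∀ β, d < wt β → anf f β = 0) : degB f ≤ d :=
  Finset.sup_le fun β hβ => not_lt.mp fun hlt => (mem_filter.mp hβ).2 (hf β hlt)

lemma exists_annihilator_degB_le_of_card_lt (d : ℕ) (g : (Fin n → ZMod 2) → ZMod 2)
    (hcard : #{x | g x = 1} < #{α : Fin n → ZMod 2 | wt α ≤ d}) :
    ∃ h : (Fin n → ZMod 2) → ZMod 2, h ≠ 0 ∧ degB h ≤ d ∧ ∀ x, g x * h x = 0 := by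
  set M : Finset (Fin n → ZMod 2) := {α | wt α ≤ d}
  set S : Finset (Fin n → ZMod 2) := {x | g x = 1}
  let L := Fintype.linearCombination (ZMod 2) (fun α : M => boolMonomial α.1)
  let Φ := LinearMap.funLeft (ZMod 2) (ZMod 2) (Subtype.val : S → _) ∘ₗ L
  obtain ⟨c, hcΦ, hc⟩ := Submodule.exists_mem_ne_zero_of_ne_bot
    (Φ.ker_ne_bot_of_finrank_lt (by simpa [Module.finrank_fintype_fun_eq_card] using hcard))
  obtain ⟨α, hα⟩ := Function.ne_iff.mp hc
  refine ⟨L c, fun h0 => hα ?_, degB_le_of_anf_eq_zero fun β hβ => ?_, fun x => ?_⟩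
  · have hcoef := anf_linearCombination_boolMonomial c α
    rw [dif_pos α.2] at hcoef
    rw [← hcoef, show L c = 0 from h0]
    simp [anf]
  · rw [anf_linearCombination_boolMonomial, dif_neg (by simpa [M] using hβ)]
  · by_cases hx : g x = 1
    · have hLc : L c x = 0 := congrFun (LinearMap.mem_ker.mp hcΦ) ⟨x, by simpa [S] using hx⟩
      rw [hLc, mul_zero]
    · rw [(zmod_two_eq_zero_iff_ne_one _).mpr hx, zero_mul]

lemma wt_le (α : Fin n → ZMod 2) : wt α ≤ n :=
  (card_filter_le _ _).trans_eq (card_fin n)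

lemma wt_add_one (α : Fin n → ZMod 2) : wt (α + 1) = n - wt α := by
  have hcompl : univ.filter (fun i => (α + 1) i = 1) = (univ.filter fun i => α i = 1)ᶜ := by
    ext i
    simp [zmod_two_eq_zero_iff_ne_one]
  rw [wt, hcompl, card_compl, Fintype.card_fin, wt]

lemma exists_wt_eq {k : ℕ} (hk : k ≤ n) : ∃ α : Fin n → ZMod 2, wt α = k :=
  ⟨fun i => if (i : ℕ) < k then 1 else 0, by simp [wt, Fin.card_filter_val_lt, hk]⟩

/-- Complementation `α ↦ α + 1` maps weights `> d` injectively to weights `< n - d ≤ d`. -/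
lemma card_wt_gt_lt_card_wt_le {d : ℕ} (hn : n ≤ 2 * d) (hd : d ≤ n) :
    #{α : Fin n → ZMod 2 | d < wt α} < #{α : Fin n → ZMod 2 | wt α ≤ d} := by
  obtain ⟨α₀, hα₀⟩ := exists_wt_eq hd
  calc #{α : Fin n → ZMod 2 | d < wt α}
      ≤ #{α : Fin n → ZMod 2 | wt α < d} := by
        refine card_le_card_of_injOn (· + 1) (fun α hα => ?_) (add_left_injective 1).injOn
        have := wt_le α
        simp only [coe_filter, mem_univ, true_and, Set.mem_ofPred_eq, wt_add_one] at hα ⊢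
        omega
    _ < #{α : Fin n → ZMod 2 | wt α ≤ d} :=
        card_lt_card <| (ssubset_iff_of_subset (monotone_filter_right _ fun _ _ => le_of_lt)).mpr
          ⟨α₀, by simp [hα₀]⟩

lemma two_pow_lt_two_mul_card_wt_le :
    2 ^ n < 2 * #{α : Fin n → ZMod 2 | wt α ≤ (n + 1) / 2} := by
  have hlt := card_wt_gt_lt_card_wt_le (n := n) (d := (n + 1) / 2) (by omega) (by omega)
  have hsum := card_filter_add_card_filter_not (s := univ) fun α : Fin n → ZMod 2 =>
    wt α ≤ (n + 1) / 2
  simp only [not_le, card_univ, Fintype.card_fun, ZMod.card, Fintype.card_fin] at hsum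
  omega

lemma card_eq_one_add_card_add_one_eq_one (f : (Fin n → ZMod 2) → ZMod 2) :
    #{x | f x = 1} + #{x | f x + 1 = 1} = 2 ^ n := by
  simp only [add_eq_right, zmod_two_eq_zero_iff_ne_one]
  rw [card_filter_add_card_filter_not, card_univ, Fintype.card_fun, ZMod.card, Fintype.card_fin]

lemma AI_le_degB {f g : (Fin n → ZMod 2) → ZMod 2} (hg : g ≠ 0)
    (hann : (∀ x, f x * g x = 0) ∨ (∀ x, (f x + 1) * g x = 0)) : AI f ≤ degB g :=
  Nat.sInf_le ⟨g, hg, rfl, hann⟩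

end

theorem stmt_16 {n : ℕ} (f : (Fin n → ZMod 2) → ZMod 2) :
    AI f ≤ (n + 1) / 2 := by
  have hM := two_pow_lt_two_mul_card_wt_le (n := n)
  have hS := card_eq_one_add_card_add_one_eq_one f
  rcases lt_or_ge #{x | f x = 1} #{α : Fin n → ZMod 2 | wt α ≤ (n + 1) / 2} with hf | hf
  · obtain ⟨g, hg, hdeg, hann⟩ := exists_annihilator_degB_le_of_card_lt ((n + 1) / 2) f hf
    exact (AI_le_degB hg (Or.inl hann)).trans hdeg
  · obtain ⟨g, hg, hdeg, hann⟩ :=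
      exists_annihilator_degB_le_of_card_lt ((n + 1) / 2) (f · + 1) (by omega)
    exact (AI_le_degB hg (Or.inr hann)).trans hdeg
end
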